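/- arXiv:1703.10897 — 2 statements merged into one kernel-verified Lean document; each statement's English description precedes it below -/
import Mathlib

section
/- For every multi-unit assignment problem (R,q), there exists a unique utility profile U* ∈ U(R,q) that is leximin-maximal in U(R,q): U* is a maximal element of U(R,q) for the leximin preorder, and any two leximin-maximal elements of U(R,q) are equal as vectors. (This unique element is the egalitarian solution φ^ES(R,q).) -/
open Finset

/-- A multi-unit assignment problem (MAP): `n` agents (indexed by `Fin n`),
a finite set `M` of objects, integer capacities `q` with `q k ≥ 1`, and a
Boolean acceptability matrix `r` with `q k ≤ |{i : r i k = 1}|` for each object. -/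
structure MAP (n : ℕ) (M : Type*) [Fintype M] where
  r : Fin n → M → Bool
  q : M → ℕ
  q_pos : ∀ k, 1 ≤ q k
  enough : ∀ k, q k ≤ (Finset.univ.filter fun i => r i k = true).card

variable {n : ℕ} {M : Type*} [Fintype M]

/-- `Z` is a random assignment matrix (RAM) for the MAP `P`. -/
def IsRAM (P : MAP n M) (Z : Fin n → M → ℝ) : Prop :=
  (∀ i k, 0 ≤ Z i k) ∧ (∀ i k, Z i k ≤ 1) ∧
  (∀ k, ∑ i, Z i k ≤ (P.q k : ℝ)) ∧
  (∀ i k, 0 < Z i k → P.r i k = true)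

/-- Utility of agent `i` at assignment `Z`: expected number of objects received. -/
noncomputable def util (Z : Fin n → M → ℝ) (i : Fin n) : ℝ := ∑ k, Z i k

/-- The set `U(R,q)` of efficient utility profiles. -/
def effU (P : MAP n M) : Set (Fin n → ℝ) :=
  {U | ∃ Z, IsRAM P Z ∧ (∑ i, util Z i) = (∑ k, (P.q k : ℝ)) ∧ ∀ i, U i = util Z i}

/-- The coordinates of `U` sorted in ascending order: `γ(U)`. -/
noncomputable def sortedVec (U : Fin n → ℝ) : Fin n → ℝ := U ∘ Tuple.sort U

/-- Lexicographic (weak) comparison of vectors. -/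
def lexLE (U V : Fin n → ℝ) : Prop :=
  U = V ∨ ∃ i, U i < V i ∧ ∀ j, j < i → U j = V j

/-- Leximin comparison: compare ascending-sorted vectors lexicographically. -/
def leximinLE (U V : Fin n → ℝ) : Prop := lexLE (sortedVec U) (sortedVec V)

/-- `U` is a leximin-maximal element of the set of efficient utility profiles of `P`.
(The unique such element is the egalitarian solution `φ^ES(P)`.) -/
def LeximinMaximal (P : MAP n M) (U : Fin n → ℝ) : Prop :=
  U ∈ effU P ∧ ∀ U' ∈ effU P, leximinLE U U' → leximinLE U' U

/-- Sum of the `t` smallest coordinates of `U`. -/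
noncomputable def lorenzSum (U : Fin n → ℝ) (t : ℕ) : ℝ :=
  ∑ i ∈ Finset.univ.filter (fun i : Fin n => (i : ℕ) < t), sortedVec U i

/-- `z` lies in agent `i`'s budget set at prices `p`. -/
def InBudget (P : MAP n M) (p : M → ℝ) (i : Fin n) (z : M → ℝ) : Prop :=
  (∀ k, 0 ≤ z k) ∧ (∀ k, z k ≤ 1) ∧ (∀ k, 0 < z k → P.r i k = true) ∧
  (∑ k, p k * z k ≤ 1)

/-- `(Z, p)` is a constrained competitive equilibrium (CCE) of `P`. -/
def IsCCE (P : MAP n M) (Z : Fin n → M → ℝ) (p : M → ℝ) : Prop :=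
  IsRAM P Z ∧ (∀ k, 0 ≤ p k) ∧
  ∀ i, InBudget P p i (Z i) ∧ ∀ z, InBudget P p i z → (∑ k, z k) ≤ util Z i

/-- Object `k` is over-demanded: its total demand strictly exceeds its capacity. -/
def Overdemanded (P : MAP n M) (k : M) : Prop :=
  P.q k < (Finset.univ.filter fun i => P.r i k = true).card

instance (P : MAP n M) : DecidablePred (Overdemanded P) :=
  fun _ => Nat.decLt _ _

/-- The restriction of the MAP `P` to its over-demanded objects. -/
def restrictO (P : MAP n M) : MAP n {k : M // Overdemanded P k} where
  r := fun i k => P.r i k.1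
  q := fun k => P.q k.1
  q_pos := fun k => P.q_pos k.1
  enough := fun k => P.enough k.1

/-- Number of perfect objects that agent `i` finds acceptable. -/
def perfectCount (P : MAP n M) (i : Fin n) : ℕ :=
  (Finset.univ.filter fun k => ¬ Overdemanded P k ∧ P.r i k = true).card

/-- `P'` is a perfect extension of `P` for agent `i`: it adjoins one new object
(`none`) acceptable to `i`, with capacity equal to its total demand, keeping
everything else unchanged. -/
def IsPerfectExtension (P : MAP n M) (P' : MAP n (Option M)) (i : Fin n) : Prop :=
  (∀ j k, P'.r j (some k) = P.r j k) ∧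
  (∀ k, P'.q (some k) = P.q k) ∧
  P'.r i none = true ∧
  P'.q none = (Finset.univ.filter fun j => P'.r j none = true).card

/-- Extend an assignment by giving each agent accepting the new object one full unit of it. -/
noncomputable def extendZ (P' : MAP n (Option M)) (Z : Fin n → M → ℝ) :
    Fin n → Option M → ℝ :=
  fun j k => match k with
    | none => if P'.r j none = true then (1 : ℝ) else 0
    | some k' => Z j k'

/-- Extend a price vector by pricing the new object at zero. -/
def extendP (p : M → ℝ) : Option M → ℝ :=
  fun k => match k with
    | none => 0
    | some k' => p k'

/-- The serial dictatorship (priority) assignment: agents are processed in the order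
`σ 0, σ 1, …`; agent `i` receives one unit of object `k` iff she reports `k`
acceptable and fewer than `q k` earlier agents report `k` acceptable. -/
noncomputable def SD (P : MAP n M) (σ : Equiv.Perm (Fin n)) (i : Fin n) (k : M) : ℝ :=
  if P.r i k = true ∧
      (Finset.univ.filter fun j : Fin n => σ.symm j < σ.symm i ∧ P.r j k = true).card < P.q k
  then 1 else 0

/-- Utility of agent `i` at assignment `Z`, counting only objects acceptable
under the (true) matrix of `P`. -/
noncomputable def trueUtil (P : MAP n M) (Z : Fin n → M → ℝ) (i : Fin n) : ℝ :=
  ∑ k ∈ Finset.univ.filter (fun k => P.r i k = true), Z i k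

/-- The coalitional value `μ(S) = Σ_k min(|{i ∈ S : r i k = 1}|, q k)`. -/
def coalValue (q : M → ℕ) (r : Fin n → M → Bool) (S : Finset (Fin n)) : ℕ :=
  ∑ k, min ((S.filter fun i => r i k = true).card) (q k)

section Aux

variable {n : ℕ}

lemma lexLE_antisymm {U V : Fin n → ℝ} (h1 : lexLE U V) (h2 : lexLE V U) : U = V := by
  rcases h1 with h1 | ⟨i, hi, hbi⟩
  · exact h1
  rcases h2 with h2 | ⟨i', hi', hbi'⟩
  · exact h2.symm
  rcases lt_trichotomy i i' with h | h | h
  · exact absurd (hbi' i h) hi.ne'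
  · subst h; exact absurd (hi.trans hi') (lt_irrefl _)
  · exact absurd (hbi i' h) hi'.ne'

lemma fin_strictMono_le {t : ℕ} {f : Fin t → Fin n} (hf : StrictMono f) (j : Fin t) :
    (j : ℕ) ≤ (f j : ℕ) := by
  have key : ∀ m : ℕ, ∀ j : Fin t, (j : ℕ) = m → m ≤ (f j : ℕ) := by
    intro m
    induction m with
    | zero => intro j _; exact Nat.zero_le _
    | succ k ih =>
      intro j hj
      have hk : k < t := by omega
      have hlt : (⟨k, hk⟩ : Fin t) < j := by
        simp [Fin.lt_def]; omega
      have h1 : k ≤ (f ⟨k, hk⟩ : ℕ) := ih ⟨k, hk⟩ rfl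
      have h2 : f ⟨k, hk⟩ < f j := hf hlt
      have := Fin.lt_def.mp h2
      omega
  exact key _ j rfl

/-- Sum of a monotone tuple over the first `T.card` indices is at most its sum over `T`. -/
lemma sum_prefix_le_sum {g : Fin n → ℝ} (hg : Monotone g) (T : Finset (Fin n)) :
    ∑ i ∈ Finset.univ.filter (fun i : Fin n => (i : ℕ) < T.card), g i ≤ ∑ i ∈ T, g i := by
  set t := T.card with ht
  have htn : t ≤ n := by simpa using Finset.card_le_univ T
  have e := T.orderEmbOfFin ht.symm
  have hsumT : ∑ i ∈ T, g i = ∑ j : Fin t, g (T.orderEmbOfFin ht.symm j) := by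
    rw [← Finset.sum_attach T (fun i => g i)]
    apply Finset.sum_bij' (fun (i : {x // x ∈ T}) _ => (T.orderIsoOfFin ht.symm).symm i)
      (fun (j : Fin t) _ => (T.orderIsoOfFin ht.symm j : {x // x ∈ T}))
    · intros; exact Finset.mem_univ _
    · intros; exact Finset.mem_attach _ _
    · intro a ha; simp
    · intro a ha; simp
    · intro a ha
      simp [Finset.orderEmbOfFin]
  have hsumL : ∑ i ∈ Finset.univ.filter (fun i : Fin n => (i : ℕ) < t), g i
      = ∑ j : Fin t, g ⟨j, lt_of_lt_of_le j.2 htn⟩ := by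
    apply Finset.sum_bij' (fun (i : Fin n) hi => (⟨(i : ℕ), by simp at hi; exact hi⟩ : Fin t))
      (fun (j : Fin t) _ => (⟨(j : ℕ), lt_of_lt_of_le j.2 htn⟩ : Fin n))
    · intros; exact Finset.mem_univ _
    · intro j _; simp
    · intro a ha; simp
    · intro a ha; simp
    · intro a ha; simp
  rw [hsumT, hsumL]
  apply Finset.sum_le_sum
  intro j _
  apply hg
  have := fin_strictMono_le (T.orderEmbOfFin ht.symm).strictMono j
  exact Fin.le_def.mpr (by simpa using this)

end Aux
section Aux2

variable {n : ℕ}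

/-- The set of indices whose sorted position is below `t`. -/
noncomputable def prefixSet (U : Fin n → ℝ) (t : ℕ) : Finset (Fin n) :=
  Finset.univ.filter fun i => (((Tuple.sort U).symm i : Fin n) : ℕ) < t

lemma sum_prefixSet (U : Fin n → ℝ) (t : ℕ) :
    ∑ i ∈ prefixSet U t, U i = lorenzSum U t := by
  unfold prefixSet lorenzSum sortedVec
  apply Finset.sum_bij' (fun (i : Fin n) _ => (Tuple.sort U).symm i)
    (fun (j : Fin n) _ => Tuple.sort U j)
  · intro a ha; simp at ha ⊢; exact ha
  · intro a ha; simp at ha ⊢; exact ha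
  · intro a ha; simp
  · intro a ha; simp
  · intro a ha; simp

lemma card_prefixSet (U : Fin n → ℝ) {t : ℕ} (ht : t ≤ n) :
    (prefixSet U t).card = t := by
  have h1 : (prefixSet U t).card
      = (Finset.univ.filter fun j : Fin n => (j : ℕ) < t).card := by
    apply Finset.card_bij' (fun (i : Fin n) _ => (Tuple.sort U).symm i)
      (fun (j : Fin n) _ => Tuple.sort U j)
    · intro a ha; simp [prefixSet] at ha ⊢; exact ha
    · intro a ha; simp [prefixSet] at ha ⊢; exact ha
    · intro a ha; simp
    · intro a ha; simp
  rw [h1]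
  have h2 : (Finset.univ.filter fun j : Fin n => (j : ℕ) < t)
      = Finset.map (Fin.castLEEmb ht) Finset.univ := by
    ext j
    simp only [Finset.mem_filter, Finset.mem_univ, true_and, Finset.mem_map]
    constructor
    · intro hj; exact ⟨⟨(j : ℕ), hj⟩, by ext; simp⟩
    · rintro ⟨a, rfl⟩; simpa using a.2
  simp [h2]

lemma lorenzSum_le_sum (U : Fin n → ℝ) (T : Finset (Fin n)) :
    lorenzSum U T.card ≤ ∑ i ∈ T, U i := by
  have hσ : ∀ i ∈ T, U i = sortedVec U ((Tuple.sort U).symm i) := by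
    intro i _; simp [sortedVec]
  have h1 : ∑ i ∈ T, U i = ∑ j ∈ T.image (Tuple.sort U).symm, sortedVec U j := by
    rw [Finset.sum_image (by intro a _ b _ h; exact (Tuple.sort U).symm.injective h)]
    exact Finset.sum_congr rfl hσ
  have hc : (T.image (Tuple.sort U).symm).card = T.card :=
    Finset.card_image_of_injective _ (Tuple.sort U).symm.injective
  rw [h1]
  calc lorenzSum U T.card = lorenzSum U (T.image (Tuple.sort U).symm).card := by rw [hc]
    _ ≤ _ := by
        unfold lorenzSum
        exact sum_prefix_le_sum (Tuple.monotone_sort U) _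

lemma filter_lt_succ {t : ℕ} (ht : t < n) :
    (Finset.univ.filter fun i : Fin n => (i : ℕ) < t + 1)
      = insert (⟨t, ht⟩ : Fin n) (Finset.univ.filter fun i : Fin n => (i : ℕ) < t) := by
  ext i
  simp only [Finset.mem_filter, Finset.mem_univ, true_and, Finset.mem_insert]
  constructor
  · intro h
    rcases Nat.lt_succ_iff_lt_or_eq.mp h with h | h
    · exact Or.inr h
    · exact Or.inl (Fin.ext h)
  · rintro (rfl | h)
    · simp
    · omega

lemma lorenzSum_succ (U : Fin n → ℝ) {t : ℕ} (ht : t < n) :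
    lorenzSum U (t + 1) = lorenzSum U t + sortedVec U ⟨t, ht⟩ := by
  unfold lorenzSum
  rw [filter_lt_succ ht, Finset.sum_insert (by simp)]
  ring

lemma prefixSet_succ (U : Fin n → ℝ) {t : ℕ} (ht : t < n) :
    prefixSet U (t + 1) = insert (Tuple.sort U ⟨t, ht⟩) (prefixSet U t) := by
  ext i
  simp only [prefixSet, Finset.mem_filter, Finset.mem_univ, true_and, Finset.mem_insert]
  constructor
  · intro h
    rcases Nat.lt_succ_iff_lt_or_eq.mp h with h | h
    · exact Or.inr h
    · left
      have : (Tuple.sort U).symm i = ⟨t, ht⟩ := Fin.ext h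
      rw [← this]; simp
  · rintro (rfl | h)
    · simp
    · omega

lemma sort_not_mem_prefixSet (U : Fin n → ℝ) {t : ℕ} (ht : t < n) :
    Tuple.sort U ⟨t, ht⟩ ∉ prefixSet U t := by
  simp [prefixSet]

end Aux2
section Aux3

variable {n : ℕ}

lemma lorenzSum_eq_of_sorted_eq {U V : Fin n → ℝ} (h : sortedVec U = sortedVec V) (t : ℕ) :
    lorenzSum U t = lorenzSum V t := by
  unfold lorenzSum; rw [h]

lemma midpoint_lorenz_ge {U V : Fin n → ℝ} (hUV : sortedVec U = sortedVec V)
    {t : ℕ} (ht : t ≤ n) :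
    lorenzSum U t ≤ lorenzSum (fun i => (U i + V i) / 2) t := by
  set W : Fin n → ℝ := fun i => (U i + V i) / 2 with hW
  have hc := card_prefixSet W ht
  have h1 : lorenzSum W t = ∑ i ∈ prefixSet W t, W i := (sum_prefixSet W t).symm
  have h2 : ∑ i ∈ prefixSet W t, W i
      = ((∑ i ∈ prefixSet W t, U i) + (∑ i ∈ prefixSet W t, V i)) / 2 := by
    rw [← Finset.sum_add_distrib, ← Finset.sum_div]
  have h3 : lorenzSum U t ≤ ∑ i ∈ prefixSet W t, U i := by
    have := lorenzSum_le_sum U (prefixSet W t); rwa [hc] at this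
  have h4 : lorenzSum U t ≤ ∑ i ∈ prefixSet W t, V i := by
    have := lorenzSum_le_sum V (prefixSet W t); rw [hc] at this
    rwa [← lorenzSum_eq_of_sorted_eq hUV t] at this
  rw [h1, h2]; linarith

/-- The sorted midpoint leximin-dominates the common sorted vector. -/
lemma midpoint_lex_ge {U V : Fin n → ℝ} (hUV : sortedVec U = sortedVec V) :
    lexLE (sortedVec U) (sortedVec (fun i => (U i + V i) / 2)) := by
  set W : Fin n → ℝ := fun i => (U i + V i) / 2 with hW
  by_cases heq : sortedVec U = sortedVec W
  · exact Or.inl heq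
  right
  have hD : (Finset.univ.filter fun i : Fin n =>
      sortedVec U i ≠ sortedVec W i).Nonempty := by
    by_contra h
    apply heq
    funext i
    by_contra hne
    exact h ⟨i, by simp [hne]⟩
  set D := Finset.univ.filter fun i : Fin n => sortedVec U i ≠ sortedVec W i with hDdef
  set i := D.min' hD with hi
  have hiD : i ∈ D := Finset.min'_mem D hD
  have hine : sortedVec U i ≠ sortedVec W i := by
    have := hiD; rw [hDdef] at this; simpa using this
  have hbefore : ∀ j, j < i → sortedVec U j = sortedVec W j := by
    intro j hj
    by_contra hne
    have : i ≤ j := Finset.min'_le D j (by simp [hDdef, hne])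
    exact absurd hj (not_lt.mpr this)
  refine ⟨i, ?_, hbefore⟩
  have hlt : (i : ℕ) < n := i.2
  have key := midpoint_lorenz_ge hUV (t := (i : ℕ) + 1) hlt
  rw [lorenzSum_succ U hlt, lorenzSum_succ W hlt] at key
  have hpre : lorenzSum U (i : ℕ) = lorenzSum W (i : ℕ) := by
    unfold lorenzSum
    apply Finset.sum_congr rfl
    intro j hj
    simp only [Finset.mem_filter] at hj
    exact hbefore j (Fin.lt_def.mpr hj.2)
  have : sortedVec U ⟨(i : ℕ), hlt⟩ ≤ sortedVec W ⟨(i : ℕ), hlt⟩ := by linarith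
  rw [Fin.eta] at this
  exact lt_of_le_of_ne this hine

/-- If the sorted midpoint equals the common sorted vector, the two vectors coincide. -/
lemma midpoint_eq_of_sorted_eq {U V : Fin n → ℝ} (hUV : sortedVec U = sortedVec V)
    (hMid : sortedVec (fun i => (U i + V i) / 2) = sortedVec U) : U = V := by
  set W : Fin n → ℝ := fun i => (U i + V i) / 2 with hW
  have hLW : ∀ t : ℕ, lorenzSum W t = lorenzSum U t := fun t => by
    unfold lorenzSum; rw [hMid]
  -- for every t ≤ n, the U-sum over the W-prefix equals lorenzSum U t
  have hA : ∀ t : ℕ, t ≤ n → (∑ i ∈ prefixSet W t, U i) = lorenzSum U t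
      ∧ (∑ i ∈ prefixSet W t, V i) = lorenzSum U t := by
    intro t ht
    have hc := card_prefixSet W ht
    have h3 : lorenzSum U t ≤ ∑ i ∈ prefixSet W t, U i := by
      have := lorenzSum_le_sum U (prefixSet W t); rwa [hc] at this
    have h4 : lorenzSum U t ≤ ∑ i ∈ prefixSet W t, V i := by
      have := lorenzSum_le_sum V (prefixSet W t); rw [hc] at this
      rwa [← lorenzSum_eq_of_sorted_eq hUV t] at this
    have h2 : (∑ i ∈ prefixSet W t, U i) + (∑ i ∈ prefixSet W t, V i)
        = 2 * lorenzSum U t := by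
      have hsum : ∑ i ∈ prefixSet W t, W i = lorenzSum W t := sum_prefixSet W t
      rw [hLW] at hsum
      have : ∑ i ∈ prefixSet W t, W i
          = ((∑ i ∈ prefixSet W t, U i) + (∑ i ∈ prefixSet W t, V i)) / 2 := by
        rw [← Finset.sum_add_distrib, ← Finset.sum_div]
      rw [this] at hsum
      linarith
    constructor <;> linarith
  have hcoord : ∀ j : Fin n, U (Tuple.sort W j) = sortedVec U j
      ∧ V (Tuple.sort W j) = sortedVec U j := by
    intro j
    have hlt : (j : ℕ) < n := j.2
    have hsucc : (j : ℕ) + 1 ≤ n := hlt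
    have hAt := hA (j : ℕ) (le_of_lt hlt)
    have hAs := hA ((j : ℕ) + 1) hsucc
    have hins : prefixSet W ((j : ℕ) + 1)
        = insert (Tuple.sort W ⟨(j : ℕ), hlt⟩) (prefixSet W (j : ℕ)) := prefixSet_succ W hlt
    have hnm := sort_not_mem_prefixSet W hlt
    have hLsucc := lorenzSum_succ U hlt
    constructor
    · have := hAs.1
      rw [hins, Finset.sum_insert hnm, hAt.1, hLsucc] at this
      rw [Fin.eta] at this
      linarith
    · have := hAs.2
      rw [hins, Finset.sum_insert hnm, hAt.2, hLsucc] at this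
      rw [Fin.eta] at this
      linarith
  funext i
  have := hcoord ((Tuple.sort W).symm i)
  simp only [Equiv.apply_symm_apply] at this
  rw [this.1, this.2]

end Aux3
section Aux4

variable {n : ℕ}

/-- Evaluation at coordinate `j` (0 if out of range). -/
noncomputable def evalCoord (n : ℕ) (j : ℕ) : (Fin n → ℝ) → ℝ :=
  fun x => if h : j < n then x ⟨j, h⟩ else 0

lemma continuous_evalCoord (j : ℕ) : Continuous (evalCoord n j) := by
  unfold evalCoord
  split
  · exact continuous_apply _
  · exact continuous_const

/-- Every nonempty compact subset of `ℝ^n` has a lexicographic maximum. -/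
lemma exists_lex_max {K : Set (Fin n → ℝ)} (hK : IsCompact K) (hne : K.Nonempty) :
    ∃ x ∈ K, ∀ y ∈ K, lexLE y x := by
  classical
  let chain : ℕ → Set (Fin n → ℝ) := fun j =>
    Nat.rec K (fun j Cj => Cj ∩ {x | ∀ y ∈ Cj, evalCoord n j y ≤ evalCoord n j x}) j
  have chain_succ : ∀ j, chain (j + 1)
      = chain j ∩ {x | ∀ y ∈ chain j, evalCoord n j y ≤ evalCoord n j x} := fun _ => rfl
  have inv : ∀ j, IsCompact (chain j) ∧ (chain j).Nonempty := by
    intro j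
    induction j with
    | zero => exact ⟨hK, hne⟩
    | succ j ih =>
      obtain ⟨hc, hn⟩ := ih
      have hclosed : IsClosed {x : Fin n → ℝ | ∀ y ∈ chain j, evalCoord n j y ≤ evalCoord n j x} := by
        have : {x : Fin n → ℝ | ∀ y ∈ chain j, evalCoord n j y ≤ evalCoord n j x}
            = ⋂ y ∈ chain j, {x | evalCoord n j y ≤ evalCoord n j x} := by
          ext x; simp
        rw [this]
        exact isClosed_biInter fun y _ =>
          isClosed_le continuous_const (continuous_evalCoord j)
      constructor
      · rw [chain_succ]; exact hc.inter_right hclosed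
      · obtain ⟨x, hx, hmax⟩ := hc.exists_isMaxOn hn (continuous_evalCoord j).continuousOn
        exact ⟨x, hx, fun y hy => hmax hy⟩
  have chain_mono : ∀ j j', j ≤ j' → chain j' ⊆ chain j := by
    intro j j' h
    induction h with
    | refl => exact subset_rfl
    | step _ ih => exact ih.trans' (by rw [chain_succ]; exact Set.inter_subset_left)
  obtain ⟨x, hx⟩ := (inv n).2
  refine ⟨x, chain_mono 0 n (Nat.zero_le n) hx, ?_⟩
  intro y hy
  by_cases hxy : y = x
  · exact Or.inl hxy
  have hD : (Finset.univ.filter fun i : Fin n => y i ≠ x i).Nonempty := by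
    by_contra h
    exact hxy (funext fun i => by
      by_contra hne
      exact h ⟨i, by simp [hne]⟩)
  set D := Finset.univ.filter fun i : Fin n => y i ≠ x i with hDdef
  set i := D.min' hD with hi
  have hiD : i ∈ D := Finset.min'_mem D hD
  have hine : y i ≠ x i := by simpa [hDdef] using hiD
  have hbefore : ∀ j, j < i → y j = x j := by
    intro j hj
    by_contra hne
    exact absurd hj (not_lt.mpr (Finset.min'_le D j (by simp [hDdef, hne])))
  -- y belongs to chain i
  have hychain : ∀ j : ℕ, j ≤ (i : ℕ) → y ∈ chain j := by
    intro j hj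
    induction j with
    | zero => exact hy
    | succ j ih =>
      have hj' : j ≤ (i : ℕ) := by omega
      have hyj := ih hj'
      rw [chain_succ]
      refine ⟨hyj, ?_⟩
      intro z hz
      have hjn : j < n := lt_of_lt_of_le (by omega : j < (i:ℕ)+1) (by exact_mod_cast Nat.succ_le_of_lt i.2)
      have hxj := chain_mono (j + 1) n (by omega : j + 1 ≤ n) hx
      rw [chain_succ] at hxj
      have hzx : evalCoord n j z ≤ evalCoord n j x := hxj.2 z hz
      have hyx : evalCoord n j y = evalCoord n j x := by
        unfold evalCoord
        rw [dif_pos hjn, dif_pos hjn]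
        exact hbefore ⟨j, hjn⟩ (by rw [Fin.lt_def]; exact lt_of_lt_of_le (Nat.lt_succ_self j) hj)
      rw [hyx]
      exact hzx
  have hyc : y ∈ chain (i : ℕ) := hychain _ le_rfl
  have hxc : x ∈ chain ((i : ℕ) + 1) := chain_mono _ n i.2 hx
  rw [chain_succ] at hxc
  have hle : evalCoord n (i : ℕ) y ≤ evalCoord n (i : ℕ) x := hxc.2 y hyc
  unfold evalCoord at hle
  rw [dif_pos i.2, dif_pos i.2] at hle
  simp only [Fin.eta] at hle
  exact Or.inr ⟨i, lt_of_le_of_ne hle hine, hbefore⟩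

end Aux4
section Aux5

variable {n : ℕ} {M : Type*} [Fintype M]

lemma effU_nonempty (P : MAP n M) : (effU P).Nonempty := by
  classical
  set c : M → ℕ := fun k => (Finset.univ.filter fun i => P.r i k = true).card with hc
  have hcpos : ∀ k, 0 < c k := fun k => lt_of_lt_of_le (P.q_pos k) (P.enough k)
  set Z : Fin n → M → ℝ := fun i k => if P.r i k = true then (P.q k : ℝ) / c k else 0 with hZ
  have hfrac_nonneg : ∀ k, (0:ℝ) ≤ (P.q k : ℝ) / c k := fun k =>
    div_nonneg (Nat.cast_nonneg _) (Nat.cast_nonneg _)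
  have hfrac_le : ∀ k, (P.q k : ℝ) / c k ≤ 1 := fun k => by
    rw [div_le_one (by exact_mod_cast hcpos k)]
    exact_mod_cast P.enough k
  have hsum : ∀ k, ∑ i, Z i k = (P.q k : ℝ) := by
    intro k
    have h1 : ∑ i, Z i k
        = ∑ i ∈ Finset.univ.filter (fun i => P.r i k = true), (P.q k : ℝ) / c k := by
      rw [Finset.sum_filter]
    rw [h1, Finset.sum_const]
    have hcc : (Finset.univ.filter fun i => P.r i k = true).card = c k := rfl
    rw [hcc, nsmul_eq_mul]
    have hcne : ((c k : ℝ)) ≠ 0 := by exact_mod_cast (hcpos k).ne'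
    field_simp
  have hram : IsRAM P Z := by
    refine ⟨fun i k => ?_, fun i k => ?_, fun k => ?_, fun i k h => ?_⟩
    · rw [hZ]; dsimp only; split
      · exact hfrac_nonneg k
      · exact le_refl 0
    · rw [hZ]; dsimp only; split
      · exact hfrac_le k
      · exact zero_le_one
    · rw [hsum k]
    · by_contra hr
      rw [hZ] at h; dsimp only at h
      rw [if_neg hr] at h
      exact absurd h (lt_irrefl 0)
  refine ⟨fun i => util Z i, Z, hram, ?_, fun i => rfl⟩
  unfold util
  rw [Finset.sum_comm]
  exact Finset.sum_congr rfl fun k _ => hsum k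

lemma effU_midpoint (P : MAP n M) {U V : Fin n → ℝ} (hU : U ∈ effU P) (hV : V ∈ effU P) :
    (fun i => (U i + V i) / 2) ∈ effU P := by
  obtain ⟨Z, ⟨hZ0, hZ1, hZq, hZr⟩, hZe, hZu⟩ := hU
  obtain ⟨Y, ⟨hY0, hY1, hYq, hYr⟩, hYe, hYu⟩ := hV
  refine ⟨fun i k => (Z i k + Y i k) / 2, ⟨?_, ?_, ?_, ?_⟩, ?_, ?_⟩
  · intro i k; have := hZ0 i k; have := hY0 i k; positivity
  · intro i k; have := hZ1 i k; have := hY1 i k; dsimp only; linarith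
  · intro k
    have h : ∑ i, (Z i k + Y i k) / 2 = ((∑ i, Z i k) + ∑ i, Y i k) / 2 := by
      rw [← Finset.sum_add_distrib, ← Finset.sum_div]
    rw [h]
    have := hZq k; have := hYq k; linarith
  · intro i k h
    dsimp only at h
    by_cases hz : 0 < Z i k
    · exact hZr i k hz
    · apply hYr i k
      have := hZ0 i k
      by_contra hy
      push_neg at hy
      have : Z i k = 0 := le_antisymm (not_lt.mp hz) (hZ0 i k)
      nlinarith [hY0 i k]
  · have h : ∀ i, util (fun i k => (Z i k + Y i k) / 2) i = (util Z i + util Y i) / 2 := by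
      intro i; unfold util
      rw [← Finset.sum_add_distrib, ← Finset.sum_div]
    simp only [h]
    rw [← Finset.sum_div, Finset.sum_add_distrib, hZe, hYe]
    ring
  · intro i
    show (U i + V i) / 2 = util (fun i k => (Z i k + Y i k) / 2) i
    rw [hZu i, hYu i]
    unfold util
    rw [← Finset.sum_add_distrib, ← Finset.sum_div]

lemma effU_compact (P : MAP n M) : IsCompact (effU P) := by
  classical
  set Kset : Set (Fin n → M → ℝ) :=
    {Z | IsRAM P Z ∧ (∑ i, util Z i) = (∑ k, (P.q k : ℝ))} with hKdef
  have hev : ∀ (i : Fin n) (k : M), Continuous fun Z : Fin n → M → ℝ => Z i k :=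
    fun i k => (continuous_apply k).comp (continuous_apply i)
  have hKclosed : IsClosed Kset := by
    have h1 : Kset = (⋂ (i : Fin n) (k : M), {Z : Fin n → M → ℝ | 0 ≤ Z i k})
        ∩ ((⋂ (i : Fin n) (k : M), {Z : Fin n → M → ℝ | Z i k ≤ 1})
        ∩ ((⋂ (k : M), {Z : Fin n → M → ℝ | ∑ i, Z i k ≤ (P.q k : ℝ)})
        ∩ ((⋂ (i : Fin n) (k : M), {Z : Fin n → M → ℝ | 0 < Z i k → P.r i k = true})
        ∩ {Z : Fin n → M → ℝ | (∑ i, util Z i) = (∑ k, (P.q k : ℝ))}))) := by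
      ext Z
      simp only [hKdef, Set.mem_setOf_eq, Set.mem_inter_iff, Set.mem_iInter, IsRAM]
      tauto
    rw [h1]
    refine IsClosed.inter ?_ (IsClosed.inter ?_ (IsClosed.inter ?_ (IsClosed.inter ?_ ?_)))
    · exact isClosed_iInter fun i => isClosed_iInter fun k =>
        isClosed_le continuous_const (hev i k)
    · exact isClosed_iInter fun i => isClosed_iInter fun k =>
        isClosed_le (hev i k) continuous_const
    · exact isClosed_iInter fun k =>
        isClosed_le (continuous_finset_sum _ fun i _ => hev i k) continuous_const
    · refine isClosed_iInter fun i => isClosed_iInter fun k => ?_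
      by_cases hr : P.r i k = true
      · have : {Z : Fin n → M → ℝ | 0 < Z i k → P.r i k = true} = Set.univ := by
          ext Z; simp [hr]
        rw [this]; exact isClosed_univ
      · have : {Z : Fin n → M → ℝ | 0 < Z i k → P.r i k = true} = {Z | Z i k ≤ 0} := by
          ext Z
          simp only [Set.mem_setOf_eq]
          constructor
          · intro h
            by_contra hpos
            exact hr (h (not_le.mp hpos))
          · intro h hpos
            exact absurd hpos (not_lt.mpr h)
        rw [this]
        exact isClosed_le (hev i k) continuous_const
    · exact isClosed_eq
        (continuous_finset_sum _ fun i _ => continuous_finset_sum _ fun k _ => hev i k)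
        continuous_const
  have hKsub : Kset ⊆ Set.pi Set.univ fun _ : Fin n =>
      Set.pi Set.univ fun _ : M => Set.Icc (0:ℝ) 1 := by
    intro Z hZ
    intro i _
    intro k _
    exact ⟨hZ.1.1 i k, hZ.1.2.1 i k⟩
  have hKcompact : IsCompact Kset := by
    refine IsCompact.of_isClosed_subset ?_ hKclosed hKsub
    exact isCompact_univ_pi fun i => isCompact_univ_pi fun k => isCompact_Icc
  have himg : effU P = (fun Z : Fin n → M → ℝ => fun i => util Z i) '' Kset := by
    ext U
    constructor
    · rintro ⟨Z, h1, h2, h3⟩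
      exact ⟨Z, ⟨h1, h2⟩, (funext fun i => (h3 i).symm)⟩
    · rintro ⟨Z, ⟨h1, h2⟩, rfl⟩
      exact ⟨Z, h1, h2, fun i => rfl⟩
  rw [himg]
  exact hKcompact.image (continuous_pi fun i => continuous_finset_sum _ fun k _ => hev i k)

end Aux5
section Aux6

variable {n : ℕ} {M : Type*} [Fintype M]

/-- The set of sorted vectors of efficient utility profiles, as a compact set. -/
noncomputable def sortedEffU (P : MAP n M) : Set (Fin n → ℝ) :=
  (⋃ σ : Equiv.Perm (Fin n), (fun U : Fin n → ℝ => U ∘ σ) '' effU P)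
    ∩ {V | Monotone V}

lemma mem_sortedEffU_iff (P : MAP n M) (x : Fin n → ℝ) :
    x ∈ sortedEffU P ↔ ∃ U ∈ effU P, sortedVec U = x := by
  constructor
  · rintro ⟨hx1, hx2⟩
    rw [Set.mem_iUnion] at hx1
    obtain ⟨σ, U, hU, rfl⟩ := hx1
    refine ⟨U, hU, ?_⟩
    have := Tuple.comp_sort_eq_comp_iff_monotone (f := U) (σ := σ) |>.mpr hx2
    exact this.symm
  · rintro ⟨U, hU, rfl⟩
    constructor
    · rw [Set.mem_iUnion]
      exact ⟨Tuple.sort U, U, hU, rfl⟩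
    · exact Tuple.monotone_sort U

lemma sortedEffU_compact (P : MAP n M) : IsCompact (sortedEffU P) := by
  apply IsCompact.inter_right
  · apply isCompact_iUnion
    intro σ
    exact (effU_compact P).image (continuous_pi fun i => continuous_apply (σ i))
  · have h : {V : Fin n → ℝ | Monotone V}
        = ⋂ (a : Fin n), ⋂ (b : Fin n), ⋂ (_ : a ≤ b), {V : Fin n → ℝ | V a ≤ V b} := by
      ext V
      simp only [Set.mem_setOf_eq, Set.mem_iInter]
      exact ⟨fun h a b hab => h hab, fun h a b hab => h a b hab⟩
    rw [h]
    exact isClosed_iInter fun a => isClosed_iInter fun b => isClosed_iInter fun _ =>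
      isClosed_le (continuous_apply a) (continuous_apply b)

lemma sortedEffU_nonempty (P : MAP n M) : (sortedEffU P).Nonempty := by
  obtain ⟨U, hU⟩ := effU_nonempty P
  exact ⟨sortedVec U, (mem_sortedEffU_iff P _).mpr ⟨U, hU, rfl⟩⟩

end Aux6
/-- For every MAP there exists a unique leximin-maximal element of the
set of efficient utility profiles: the egalitarian solution `φ^ES(R,q)`. -/
theorem es_exists_unique {n : ℕ} {M : Type*} [Fintype M] (P : MAP n M) :
    ∃ Ustar, LeximinMaximal P Ustar ∧ ∀ U, LeximinMaximal P U → U = Ustar := by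
  obtain ⟨x, hxG, hmax⟩ := exists_lex_max (sortedEffU_compact P) (sortedEffU_nonempty P)
  obtain ⟨Ustar, hUs, hxs⟩ := (mem_sortedEffU_iff P x).mp hxG
  have key : ∀ U' ∈ effU P, leximinLE U' Ustar := by
    intro U' hU'
    unfold leximinLE
    rw [hxs]
    exact hmax (sortedVec U') ((mem_sortedEffU_iff P _).mpr ⟨U', hU', rfl⟩)
  refine ⟨Ustar, ⟨hUs, fun U' hU' _ => key U' hU'⟩, ?_⟩
  intro U hU
  have h1 : leximinLE U Ustar := key U hU.1
  have h2 : leximinLE Ustar U := hU.2 Ustar hUs h1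
  have hsorted : sortedVec U = sortedVec Ustar := lexLE_antisymm h1 h2
  set W : Fin n → ℝ := fun i => (Ustar i + U i) / 2 with hWdef
  have hWmem : W ∈ effU P := effU_midpoint P hUs hU.1
  have hlex : lexLE (sortedVec Ustar) (sortedVec W) :=
    midpoint_lex_ge (U := Ustar) (V := U) hsorted.symm
  have h3 : leximinLE W Ustar := key W hWmem
  have hs2 : sortedVec W = sortedVec Ustar := lexLE_antisymm h3 hlex
  exact (midpoint_eq_of_sorted_eq (U := Ustar) (V := U) hsorted.symm hs2).symm
end

section
/- The egalitarian solution is envy-free: for every MAP (R,q) and agents i, j ∈ N, if r i k ≤ r j k for every k ∈ M (agent i's acceptable set is contained in agent j's), then φ^ES_i(R,q) ≤ φ^ES_j(R,q). In particular, if r i k = r j k for every k, then φ^ES_i(R,q) = φ^ES_j(R,q) (equal treatment of equals). -/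
open Finset

variable {n : ℕ} {M : Type*} [Fintype M]

section EnvyFreeHelpers

lemma sortedVec_monotone (U : Fin n → ℝ) : Monotone (sortedVec U) :=
  Tuple.monotone_sort U

lemma card_sortedVec_filter (U : Fin n → ℝ) (x : ℝ) :
    (univ.filter fun m => sortedVec U m ≤ x).card
      = (univ.filter fun l => U l ≤ x).card := by
  apply Finset.card_bij (fun m _ => Tuple.sort U m)
  · intro m hm
    simp only [mem_filter, mem_univ, true_and, sortedVec, Function.comp] at hm ⊢
    exact (Finset.mem_filter.mp hm).2
  · intro m₁ _ m₂ _ h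
    exact (Tuple.sort U).injective h
  · intro l hl
    refine ⟨(Tuple.sort U).symm l, ?_, by simp⟩
    simp only [mem_filter, mem_univ, true_and, sortedVec, Function.comp] at hl ⊢
    exact Finset.mem_filter.mpr ⟨mem_univ _, by simpa using hl⟩

lemma mono_le_of_card {V : Fin n → ℝ} (hV : Monotone V) {x : ℝ} {c : Fin n}
    (hc : (c : ℕ) < (univ.filter fun m => V m ≤ x).card) : V c ≤ x := by
  by_contra h
  have hsub : (univ.filter fun m => V m ≤ x) ⊆ Finset.Iio c := by
    intro m hm
    simp only [mem_filter] at hm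
    rw [Finset.mem_Iio]
    by_contra hmc
    exact h (le_trans (hV (le_of_not_gt hmc)) hm.2)
  have h2 := Finset.card_le_card hsub
  rw [Fin.card_Iio] at h2
  omega

lemma card_lt_of_mono_le {V : Fin n → ℝ} (hV : Monotone V) {x : ℝ} {c : Fin n}
    (h : V c ≤ x) : (c : ℕ) < (univ.filter fun m => V m ≤ x).card := by
  have hsub : Finset.Iic c ⊆ univ.filter fun m => V m ≤ x := by
    intro m hm
    rw [Finset.mem_Iic] at hm
    simp only [mem_filter, mem_univ, true_and]
    exact le_trans (hV hm) h
  have h2 := Finset.card_le_card hsub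
  rw [Fin.card_Iic] at h2
  omega

lemma es_aux (P : MAP n M) (i j : Fin n)
    (U : Fin n → ℝ) (hU : LeximinMaximal P U)
    (hsub : ∀ k, P.r i k = true → P.r j k = true) : U i ≤ U j := by
  classical
  by_contra hlt
  push_neg at hlt
  obtain ⟨⟨Z, hZ, heff, hUZ⟩, hmax⟩ := hU
  obtain ⟨hZ0, hZ1, hZcol, hZr⟩ := hZ
  have hij : i ≠ j := by rintro rfl; exact lt_irrefl _ hlt
  by_cases hex : ∃ k, 0 < Z i k ∧ Z j k < 1
  case neg =>
    push_neg at hex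
    have hle : U i ≤ U j := by
      rw [hUZ i, hUZ j]
      apply Finset.sum_le_sum
      intro k _
      rcases lt_or_ge 0 (Z i k) with h | h
      · exact le_trans (hZ1 i k) (hex k h)
      · exact le_trans h (hZ0 j k)
    exact absurd hle (not_le.mpr hlt)
  case pos =>
  obtain ⟨k₀, hk1, hk2⟩ := hex
  set δ : ℝ := min (min (Z i k₀) (1 - Z j k₀)) ((U i - U j) / 2) with hδdef
  have hδpos : 0 < δ := lt_min (lt_min hk1 (by linarith)) (by linarith)
  have hδ1 : δ ≤ Z i k₀ := le_trans (min_le_left _ _) (min_le_left _ _)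
  have hδ2 : δ ≤ 1 - Z j k₀ := le_trans (min_le_left _ _) (min_le_right _ _)
  have hδ3 : δ ≤ (U i - U j) / 2 := min_le_right _ _
  have hab : U j + δ ≤ U i - δ := by linarith
  set Z' : Fin n → M → ℝ := fun l k =>
    Z l k + (if l = i ∧ k = k₀ then -δ else 0) + (if l = j ∧ k = k₀ then δ else 0)
    with hZ'def
  have hZ'val : ∀ l k, Z' l k =
      Z l k + (if l = i ∧ k = k₀ then -δ else 0) + (if l = j ∧ k = k₀ then δ else 0) :=
    fun l k => rfl
  have colkey : ∀ (c : Fin n) (v : ℝ) (k : M),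
      (∑ l, (if l = c ∧ k = k₀ then v else 0)) = if k = k₀ then v else 0 := by
    intro c v k
    by_cases hk : k = k₀ <;> simp [ite_and, hk, Finset.sum_ite_eq']
  have rowkey : ∀ (c : Fin n) (v : ℝ) (l : Fin n),
      (∑ k, (if l = c ∧ k = k₀ then v else 0)) = if l = c then v else 0 := by
    intro c v l
    by_cases hl : l = c <;> simp [ite_and, hl, Finset.sum_ite_eq']
  have hram : IsRAM P Z' := by
    refine ⟨?_, ?_, ?_, ?_⟩
    · intro l k
      rw [hZ'val]
      split_ifs with h1 h2 h2
      · exact absurd (h1.1.symm.trans h2.1) hij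
      · obtain ⟨rfl, rfl⟩ := h1
        linarith
      · linarith [hZ0 l k]
      · linarith [hZ0 l k]
    · intro l k
      rw [hZ'val]
      split_ifs with h1 h2 h2
      · exact absurd (h1.1.symm.trans h2.1) hij
      · linarith [hZ1 l k]
      · obtain ⟨rfl, rfl⟩ := h2
        linarith
      · linarith [hZ1 l k]
    · intro k
      have hcol : ∑ l, Z' l k = ∑ l, Z l k := by
        simp only [hZ'val, Finset.sum_add_distrib, colkey]
        split_ifs <;> ring
      rw [hcol]
      exact hZcol k
    · intro l k h
      by_cases h1 : l = i ∧ k = k₀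
      · rw [h1.1, h1.2]
        exact hZr i k₀ hk1
      by_cases h2 : l = j ∧ k = k₀
      · rw [h2.1, h2.2]
        exact hsub k₀ (hZr i k₀ hk1)
      · apply hZr l k
        rw [hZ'val] at h
        simpa [h1, h2] using h
  have hrow : ∀ l, util Z' l = U l + (if l = i then -δ else 0) + (if l = j then δ else 0) := by
    intro l
    simp only [util, hZ'val, Finset.sum_add_distrib, rowkey]
    rw [hUZ l, util]
  have heff' : (∑ l, util Z' l) = ∑ k, (P.q k : ℝ) := by
    have h1 : (∑ l, util Z' l) = (∑ l, U l) + -δ + δ := by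
      simp only [hrow, Finset.sum_add_distrib, Finset.sum_ite_eq' Finset.univ,
        Finset.mem_univ, if_true]
    have h2 : (∑ l, U l) = ∑ l, util Z l := Finset.sum_congr rfl fun l _ => hUZ l
    rw [h1, h2, heff]; ring
  set U' : Fin n → ℝ := fun l => util Z' l with hU'def
  have hmem : U' ∈ effU P := ⟨Z', hram, heff', fun l => rfl⟩
  have hU'i : U' i = U i - δ := by
    show util Z' i = U i - δ
    rw [hrow i, if_pos rfl, if_neg hij]
    ring
  have hU'j : U' j = U j + δ := by
    show util Z' j = U j + δ
    rw [hrow j, if_neg (Ne.symm hij), if_pos rfl]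
    ring
  have hU'l : ∀ l, l ≠ i → l ≠ j → U' l = U l := by
    intro l h1 h2
    show util Z' l = U l
    rw [hrow l, if_neg h1, if_neg h2]
    ring
  have hmonoV : Monotone (sortedVec U) := sortedVec_monotone U
  have hmonoV' : Monotone (sortedVec U') := sortedVec_monotone U'
  -- counting at the level U j
  have hj_not : j ∉ univ.filter fun l => U' l ≤ U j := by
    simp only [mem_filter, mem_univ, true_and, hU'j, not_le]
    linarith
  have hfa : (univ.filter fun l => U l ≤ U j)
      = insert j (univ.filter fun l => U' l ≤ U j) := by
    ext l
    simp only [mem_filter, mem_univ, true_and, Finset.mem_insert]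
    by_cases h1 : l = i
    · subst h1
      constructor
      · intro h; linarith
      · rintro (h | h)
        · exact absurd h hij
        · rw [hU'i] at h; linarith
    · by_cases h2 : l = j
      · subst h2
        constructor
        · intro _; exact Or.inl rfl
        · intro _; exact le_rfl
      · rw [hU'l l h1 h2]
        constructor
        · intro h; exact Or.inr h
        · rintro (h | h)
          · exact absurd h h2
          · exact h
  have hcard : (univ.filter fun l => U l ≤ U j).card
      = (univ.filter fun l => U' l ≤ U j).card + 1 := by
    rw [hfa, Finset.card_insert_of_notMem hj_not]
  have hcn' : (univ.filter fun l => U' l ≤ U j).card < n := by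
    have h1 : (univ.filter fun l => U l ≤ U j).card ≤ n := by
      calc (univ.filter fun l => U l ≤ U j).card
          ≤ (univ : Finset (Fin n)).card := Finset.card_le_card (Finset.filter_subset _ _)
        _ = n := Finset.card_fin n
    omega
  set cf : Fin n := ⟨(univ.filter fun l => U' l ≤ U j).card, hcn'⟩ with hcf
  have hVc : sortedVec U cf ≤ U j := by
    apply mono_le_of_card hmonoV
    rw [card_sortedVec_filter, hcard]
    exact Nat.lt_succ_self _
  have hV'c : ¬ sortedVec U' cf ≤ U j := by
    intro h
    have h2 := card_lt_of_mono_le hmonoV' h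
    rw [card_sortedVec_filter] at h2
    exact absurd h2 (lt_irrefl _)
  have hne : sortedVec U cf ≠ sortedVec U' cf := by
    intro h
    exact hV'c (h ▸ hVc)
  have hSne : (univ.filter fun m => sortedVec U m ≠ sortedVec U' m).Nonempty :=
    ⟨cf, by simp [hne]⟩
  set m₀ : Fin n := Finset.min' _ hSne with hm₀def
  have hm₀S : m₀ ∈ univ.filter fun m => sortedVec U m ≠ sortedVec U' m :=
    Finset.min'_mem _ hSne
  have hm₀ne : sortedVec U m₀ ≠ sortedVec U' m₀ := by
    simpa using hm₀S
  have hpre : ∀ m, m < m₀ → sortedVec U m = sortedVec U' m := by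
    intro m hm
    by_contra h
    exact absurd (Finset.min'_le _ m (by simp [h])) (not_le.mpr hm)
  have hm₀c : m₀ ≤ cf := Finset.min'_le _ _ (by simp [hne])
  have hkey : sortedVec U m₀ < sortedVec U' m₀ := by
    rcases lt_trichotomy (sortedVec U m₀) (sortedVec U' m₀) with h | h | h
    · exact h
    · exact absurd h hm₀ne
    · exfalso
      have hxa : sortedVec U' m₀ < U j :=
        lt_of_lt_of_le (lt_of_lt_of_le h (hmonoV hm₀c)) hVc
      have hfe : (univ.filter fun l => U' l ≤ sortedVec U' m₀)
          = (univ.filter fun l => U l ≤ sortedVec U' m₀) := by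
        ext l
        simp only [mem_filter, mem_univ, true_and]
        by_cases h1 : l = i
        · subst h1
          rw [hU'i]
          constructor <;> intro h' <;> linarith
        · by_cases h2 : l = j
          · subst h2
            rw [hU'j]
            constructor <;> intro h' <;> linarith
          · rw [hU'l l h1 h2]
      have hge : (m₀ : ℕ) < (univ.filter fun m => sortedVec U' m ≤ sortedVec U' m₀).card :=
        card_lt_of_mono_le hmonoV' le_rfl
      have hle2 : (univ.filter fun m => sortedVec U m ≤ sortedVec U' m₀).card ≤ (m₀ : ℕ) := by
        have hsub2 : (univ.filter fun m => sortedVec U m ≤ sortedVec U' m₀)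
            ⊆ Finset.Iio m₀ := by
          intro m hm
          simp only [mem_filter, mem_univ, true_and] at hm
          rw [Finset.mem_Iio]
          by_contra hc2
          exact absurd (le_trans (hmonoV (le_of_not_gt hc2)) hm) (not_le.mpr h)
        calc (univ.filter fun m => sortedVec U m ≤ sortedVec U' m₀).card
            ≤ (Finset.Iio m₀).card := Finset.card_le_card hsub2
          _ = (m₀ : ℕ) := Fin.card_Iio m₀
      rw [card_sortedVec_filter U' _] at hge
      rw [card_sortedVec_filter U _] at hle2
      rw [hfe] at hge
      omega
  have hUU' : leximinLE U U' := Or.inr ⟨m₀, hkey, fun m hm => hpre m hm⟩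
  have hback : leximinLE U' U := hmax U' hmem hUU'
  rcases hback with h | ⟨m, hm1, hm2⟩
  · exact hm₀ne (congrFun h m₀).symm
  · have hmm : m = m₀ := by
      rcases lt_trichotomy m m₀ with h' | h' | h'
      · exact absurd (hpre m h').symm (ne_of_lt hm1)
      · exact h'
      · exact absurd (hm2 m₀ h') fun hh => hm₀ne hh.symm
    rw [hmm] at hm1
    exact absurd hm1 (not_lt.mpr (le_of_lt hkey))

end EnvyFreeHelpers

/-- The egalitarian solution is envy-free: if agent `i`'s acceptable
set is contained in agent `j`'s, then `φ^ES_i(R,q) ≤ φ^ES_j(R,q)`; in particular equal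
agents receive equal utilities. -/
theorem es_envy_free {n : ℕ} {M : Type*} [Fintype M] (P : MAP n M) (i j : Fin n)
    (U : Fin n → ℝ) (hU : LeximinMaximal P U) :
    ((∀ k, P.r i k = true → P.r j k = true) → U i ≤ U j) ∧
    ((∀ k, P.r i k = P.r j k) → U i = U j) := by
  refine ⟨es_aux P i j U hU, fun h => ?_⟩
  exact le_antisymm (es_aux P i j U hU fun k hk => (h k) ▸ hk)
    (es_aux P j i U hU fun k hk => (h k).symm ▸ hk)
end
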